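/- If a partition λ of 2n+1 has all even parts of even multiplicity, and Φ̂^B(λ) is defined by: replacing each odd part λ_i by (λ_i + (−1)^i)/2, and replacing every maximal string of equal even parts λ_i = λ_{i+1} = ... = 2k (with λ_{i−1} > 2k) by k, k, ... if i is even, or by k−1, k+1, k−1, k+1, ... if i is odd, then the resulting sequence is a quasi-partition of n whose associated bipartition (μ;ν) = Φ̂^B(λ) satisfies μ_i ≥ ν_i − 2 and ν_i ≥ μ_{i+1} for all i, i.e. Φ̂^B(λ) ∈ Q_n^B. -/

import Mathlib

open Finset

/-- Partial sum of the first `k` terms of a sequence of naturals. -/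
def psum (π : ℕ → ℕ) (k : ℕ) : ℕ := ∑ i ∈ Finset.range k, π i

/-- A composition of `n`: almost all terms zero, summing to `n`. -/
def IsComposition (n : ℕ) (π : ℕ → ℕ) : Prop :=
  ∃ N, (∀ i, N ≤ i → π i = 0) ∧ psum π N = n

/-- Dominance order: `l` dominates `π`. -/
def Dominates (l π : ℕ → ℕ) : Prop := ∀ k, psum π k ≤ psum l k

/-- A partition: weakly decreasing sequence. -/
def IsPartition (π : ℕ → ℕ) : Prop := ∀ i, π (i + 1) ≤ π i

/-- A quasi-partition: `π i ≥ π (i+2)` for all `i`. -/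
def IsQuasiPartition (π : ℕ → ℕ) : Prop := ∀ i, π (i + 2) ≤ π i

/-- Interleaving of two sequences: `(ρ₁, σ₁, ρ₂, σ₂, …)` (0-indexed). -/
def interleave (ρ σ : ℕ → ℕ) (i : ℕ) : ℕ :=
  if i % 2 = 0 then ρ (i / 2) else σ (i / 2)

/-- A bipartition of `n`: a pair of partitions whose interleaving sums to `n`. -/
def IsBipartition (n : ℕ) (ρ σ : ℕ → ℕ) : Prop :=
  IsPartition ρ ∧ IsPartition σ ∧ IsComposition n (interleave ρ σ)

/-- Interleaved dominance order on bipartitions: `(ρ;σ) ≤ (μ;ν)`. -/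
def BiLE (ρ σ μ ν : ℕ → ℕ) : Prop :=
  Dominates (interleave μ ν) (interleave ρ σ)

/-- The map `Φ^C` on sequences: replace a consecutive pair `2s < 2t`
by `s+t, s+t` (pointwise description; replacements never overlap for
quasi-partitions). -/
def phiC (π : ℕ → ℕ) : ℕ → ℕ
  | 0 => if π 0 < π 1 then (π 0 + π 1) / 2 else π 0
  | (j + 1) =>
      if π (j + 1) < π (j + 2) then (π (j + 1) + π (j + 2)) / 2
      else if π j < π (j + 1) then (π j + π (j + 1)) / 2
      else π (j + 1)

/-- `Φ^C` of a bipartition: apply `phiC` to the doubled interleaving. -/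
def PhiC (ρ σ : ℕ → ℕ) : ℕ → ℕ := phiC (fun i => 2 * interleave ρ σ i)

/-- Membership in `P^C_{2n}`: partition of `2n` with every odd part of even
multiplicity. -/
def IsPC (n : ℕ) (l : ℕ → ℕ) : Prop :=
  IsPartition l ∧ IsComposition (2 * n) l ∧
    ∀ a : ℕ, Odd a → Even ({i | l i = a}.ncard)

/-- C-distinguished: `μ i ≥ ν i - 1` and `ν i ≥ μ (i+1) - 1`. -/
def QC (μ ν : ℕ → ℕ) : Prop :=
  ∀ i, ν i ≤ μ i + 1 ∧ μ (i + 1) ≤ ν i + 1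

/-- B-distinguished: `μ i ≥ ν i - 2` and `ν i ≥ μ (i+1)`. -/
def QB (μ ν : ℕ → ℕ) : Prop :=
  ∀ i, ν i ≤ μ i + 2 ∧ μ (i + 1) ≤ ν i

/-- Special: `μ i ≥ ν i - 1` and `ν i ≥ μ (i+1)`. -/
def QS (μ ν : ℕ → ℕ) : Prop :=
  ∀ i, ν i ≤ μ i + 1 ∧ μ (i + 1) ≤ ν i

/-- The condition defining `Q_n^{B,2}`: `μ i ≥ ν i - 2`. -/
def QB2 (μ ν : ℕ → ℕ) : Prop := ∀ i, ν i ≤ μ i + 2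

/-- For an antitone sequence, the starting index of the run of equal values
containing index `i`. -/
noncomputable def runStart (l : ℕ → ℕ) (i : ℕ) : ℕ := {j | l i < l j}.ncard

/-- The map `Φ̂^C`, pointwise: halve even parts; replace an (even-length)
maximal run of an odd part `2k+1` with `k, k+1, k, k+1, …`. -/
noncomputable def hphiC (l : ℕ → ℕ) (i : ℕ) : ℕ :=
  if Even (l i) then l i / 2
  else if Even (i - runStart l i) then l i / 2 else l i / 2 + 1

/-- Partial sums of an integer sequence. -/
def zsum (π : ℕ → ℤ) (k : ℕ) : ℤ := ∑ i ∈ Finset.range k, π i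

/-- Dominance order on integer sequences. -/
def ZDominates (l π : ℕ → ℤ) : Prop := ∀ k, zsum π k ≤ zsum l k

/-- The interleaved integer sequence `(2ρ₁+1, 2σ₁−1, 2ρ₂+1, 2σ₂−1, …)`. -/
def interB (ρ σ : ℕ → ℕ) (i : ℕ) : ℤ :=
  if i % 2 = 0 then 2 * (ρ (i / 2) : ℤ) + 1 else 2 * (σ (i / 2) : ℤ) - 1

/-- The map `Φ^B` on integer sequences: replace a consecutive pair `s < t`
by `(s+t)/2, (s+t)/2` (pointwise description). -/
def phiB (π : ℕ → ℤ) : ℕ → ℤ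
  | 0 => if π 0 < π 1 then (π 0 + π 1) / 2 else π 0
  | (j + 1) =>
      if π (j + 1) < π (j + 2) then (π (j + 1) + π (j + 2)) / 2
      else if π j < π (j + 1) then (π j + π (j + 1)) / 2
      else π (j + 1)

/-- `Φ^B` of a bipartition. -/
def PhiB (ρ σ : ℕ → ℕ) : ℕ → ℤ := phiB (interB ρ σ)

/-- Membership in `P^B_{2n+1}` for an integer sequence: nonnegative, weakly
decreasing, summing to `2n+1`, with every (positive) even part of even
multiplicity. -/
def IsPB (n : ℕ) (l : ℕ → ℤ) : Prop :=
  (∀ i, 0 ≤ l i) ∧ (∀ i, l (i + 1) ≤ l i) ∧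
  (∃ N, (∀ i, N ≤ i → l i = 0) ∧ zsum l N = 2 * n + 1) ∧
  ∀ a : ℤ, 0 < a → Even a → Even ({i | l i = a}.ncard)

/-- Membership in `P^B_{2n+1}` for a natural-number partition. -/
def IsPBN (n : ℕ) (l : ℕ → ℕ) : Prop :=
  IsPartition l ∧ IsComposition (2 * n + 1) l ∧
    ∀ a : ℕ, 0 < a → Even a → Even ({i | l i = a}.ncard)

/-- The map `Φ̂^B`, pointwise (0-indexed, so the paper's index `i` is `j+1`):
an odd part `λ_i` becomes `(λ_i + (−1)^i)/2`; a maximal run of an even part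
`2k` starting at (0-indexed) position `s` becomes `k, k, …` if `s` is odd
(paper's `i` even) and `k−1, k+1, k−1, k+1, …` if `s` is even (paper's `i`
odd). -/
noncomputable def hphiB (l : ℕ → ℕ) (j : ℕ) : ℕ :=
  if Odd (l j) then (if Even j then (l j - 1) / 2 else (l j + 1) / 2)
  else
    if Odd (runStart l j) then l j / 2
    else if Even (j - runStart l j) then l j / 2 - 1 else l j / 2 + 1

/-- First component of the special closure `(ρ;σ)°`. -/
def scRho (ρ σ : ℕ → ℕ) : ℕ → ℕ
  | 0 => if ρ 0 + 1 < σ 0 then (ρ 0 + σ 0) / 2 else ρ 0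
  | (i + 1) =>
      if ρ (i + 1) + 1 < σ (i + 1) then (ρ (i + 1) + σ (i + 1)) / 2
      else if σ i < ρ (i + 1) then (σ i + ρ (i + 1)) / 2
      else ρ (i + 1)

/-- Second component of the special closure `(ρ;σ)°`. -/
def scSigma (ρ σ : ℕ → ℕ) (i : ℕ) : ℕ :=
  if ρ i + 1 < σ i then (ρ i + σ i + 1) / 2
  else if σ i < ρ (i + 1) then (σ i + ρ (i + 1) + 1) / 2
  else σ i

/-- First component of the closure `(ρ;σ)~` into `Q_n^{B,2}`. -/
def tRho (ρ σ : ℕ → ℕ) (i : ℕ) : ℕ :=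
  if ρ i + 2 < σ i then (ρ i + σ i + 1) / 2 - 1 else ρ i

/-- Second component of the closure `(ρ;σ)~` into `Q_n^{B,2}`. -/
def tSigma (ρ σ : ℕ → ℕ) (i : ℕ) : ℕ :=
  if ρ i + 2 < σ i then (ρ i + σ i) / 2 + 1 else σ i

/-- First component of the closure `(ρ;σ)^B` into `Q_n^B`. -/
def bRho (ρ σ : ℕ → ℕ) : ℕ → ℕ
  | 0 => if ρ 0 + 2 < σ 0 then (ρ 0 + σ 0 + 1) / 2 - 1 else ρ 0
  | (i + 1) =>
      if ρ (i + 1) + 2 < σ (i + 1) then (ρ (i + 1) + σ (i + 1) + 1) / 2 - 1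
      else if σ i < ρ (i + 1) then (σ i + ρ (i + 1)) / 2
      else ρ (i + 1)

/-- Second component of the closure `(ρ;σ)^B` into `Q_n^B`. -/
def bSigma (ρ σ : ℕ → ℕ) (i : ℕ) : ℕ :=
  if ρ i + 2 < σ i then (ρ i + σ i) / 2 + 1
  else if σ i < ρ (i + 1) then (σ i + ρ (i + 1) + 1) / 2
  else σ i

/-- First component of the closure `(ρ;σ)^C` into `Q_n^C`. -/
def cRho (ρ σ : ℕ → ℕ) : ℕ → ℕ
  | 0 => if ρ 0 + 1 < σ 0 then (ρ 0 + σ 0) / 2 else ρ 0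
  | (i + 1) =>
      if ρ (i + 1) + 1 < σ (i + 1) then (ρ (i + 1) + σ (i + 1)) / 2
      else if σ i + 1 < ρ (i + 1) then (σ i + ρ (i + 1) + 1) / 2
      else ρ (i + 1)

/-- Second component of the closure `(ρ;σ)^C` into `Q_n^C`. -/
def cSigma (ρ σ : ℕ → ℕ) (i : ℕ) : ℕ :=
  if ρ i + 1 < σ i then (ρ i + σ i + 1) / 2
  else if σ i + 1 < ρ (i + 1) then (σ i + ρ (i + 1)) / 2
  else σ i
/-!
Write `2 Φ̂(λ)_j = λ_j + e_j`. The corrections telescope: with `E_k = 1` when `λ_0 + ⋯ + λ_{k-1}`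
is odd and `E_k = 2 (k mod 2)` otherwise, one has `2 Φ̂(λ)_j + E_{j+1} = λ_j + E_j`. This rests on
a parity fact: since positive even parts come in runs of even length, `λ_0 + ⋯ + λ_{j-1}` has the
parity of `j` when `λ_j` is odd, and the parity of the start of the run of `λ_j` when `λ_j` is
even. Summing up to the end of the support, where the partial sum `2n+1` is odd, gives
`2 |Φ̂(λ)| + 1 = 2n + 1`. The inequalities only need `|2 Φ̂(λ)_j - λ_j| ≤ 2`, with the sign of
`2 Φ̂(λ)_j - λ_j` fixed by the parity of `j`.
-/

namespace IsPartition

variable {l : ℕ → ℕ}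

theorem antitone (hl : IsPartition l) : Antitone l := antitone_nat_of_succ_le hl

theorem lt_runStart_iff (hl : IsPartition l) (j i : ℕ) : i < runStart l j ↔ l j < l i := by
  have hex : ∃ k, l k ≤ l j := ⟨j, le_rfl⟩
  have key : ∀ i, l j < l i ↔ i < Nat.find hex := fun i => by
    refine ⟨fun h => ?_, fun h => not_le.1 (Nat.find_min hex h)⟩
    by_contra hc
    exact (hl.antitone (not_lt.1 hc)).trans (Nat.find_spec hex) |>.not_gt h
  have hrun : runStart l j = Nat.find hex := by
    rw [runStart, show {i | l j < l i} = Set.Iio (Nat.find hex) from Set.ext key]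
    simp
  rw [hrun, key]

theorem runStart_le (hl : IsPartition l) (j : ℕ) : runStart l j ≤ j :=
  not_lt.1 fun h => lt_irrefl _ ((hl.lt_runStart_iff j j).1 h)

theorem apply_eq_of_runStart_le {i j : ℕ} (hl : IsPartition l) (hsi : runStart l j ≤ i)
    (hij : i ≤ j) : l i = l j :=
  le_antisymm (not_lt.1 fun h => (not_lt.2 hsi) ((hl.lt_runStart_iff j i).2 h)) (hl.antitone hij)

theorem runStart_succ_of_lt {j : ℕ} (hl : IsPartition l) (h : l (j + 1) < l j) :
    runStart l (j + 1) = j + 1 :=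
  le_antisymm (hl.runStart_le _) ((hl.lt_runStart_iff (j + 1) j).2 h)

theorem setOf_apply_eq_eq_Ico {j : ℕ} (hl : IsPartition l) (h : l (j + 1) < l j) :
    {i | l i = l j} = Set.Ico (runStart l j) (j + 1) := by
  ext i
  simp only [Set.mem_ofPred_eq, Set.mem_Ico]
  refine ⟨fun hi => ⟨not_lt.1 fun hs => ?_, not_le.1 fun hs => ?_⟩,
    fun hi => hl.apply_eq_of_runStart_le hi.1 (Nat.le_of_lt_succ hi.2)⟩
  · exact (hl.lt_runStart_iff j i).1 hs |>.ne' hi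
  · exact (hl.antitone hs).trans_lt h |>.ne hi

end IsPartition

theorem runStart_congr {l : ℕ → ℕ} {i j : ℕ} (h : l i = l j) : runStart l i = runStart l j := by
  rw [runStart, runStart, h]

theorem psum_succ (l : ℕ → ℕ) (k : ℕ) : psum l (k + 1) = psum l k + l k :=
  Finset.sum_range_succ l k

theorem psum_eq_of_forall_ge_eq_zero {l : ℕ → ℕ} {j N : ℕ} (hj : ∀ i, j ≤ i → l i = 0)
    (hN : ∀ i, N ≤ i → l i = 0) : psum l j = psum l N :=
  (Finset.eventually_constant_sum hj (le_max_left j N)).symm.trans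
    (Finset.eventually_constant_sum hN (le_max_right j N))

section Parity

variable {l : ℕ → ℕ} (hl : IsPartition l)
  (hm : ∀ a : ℕ, 0 < a → Even a → Even ({i | l i = a}.ncard))
include hl hm

theorem psum_mod_two (j : ℕ) :
    psum l j % 2 = if l j % 2 = 1 then j % 2 else runStart l j % 2 := by
  induction j with
  | zero => simp [psum, Nat.le_zero.1 (hl.runStart_le 0)]
  | succ j ih =>
    have hs := hl.runStart_le j
    rw [psum_succ]
    rcases (hl j).lt_or_eq with hlt | heq
    · have hrun : (j + 1 - runStart l j) % 2 = 0 ∨ l j % 2 = 1 := by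
        rcases Nat.mod_two_eq_zero_or_one (l j) with he | ho
        · have := hm (l j) (by omega) (Nat.even_iff.2 he)
          rw [hl.setOf_apply_eq_eq_Ico hlt] at this
          simp_all [Nat.even_iff]
        · exact .inr ho
      rw [hl.runStart_succ_of_lt hlt]
      split_ifs at ih ⊢ <;> omega
    · rw [heq, runStart_congr heq]
      split_ifs at ih ⊢ <;> omega

end Parity

def hphiBDefect (l : ℕ → ℕ) (k : ℕ) : ℕ := if psum l k % 2 = 1 then 1 else 2 * (k % 2)

section Balance

variable {l : ℕ → ℕ} (hl : IsPartition l)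
  (hm : ∀ a : ℕ, 0 < a → Even a → Even ({i | l i = a}.ncard))
include hl hm

/-- `h0` excludes the truncated value `0 / 2 - 1` of `hphiB`. -/
theorem two_mul_hphiB_add_hphiBDefect {j : ℕ} (h0 : l j = 0 → psum l j % 2 = 1) :
    2 * hphiB l j + hphiBDefect l (j + 1) = l j + hphiBDefect l j := by
  have hpar := psum_mod_two hl hm j
  have hs := hl.runStart_le j
  unfold hphiB hphiBDefect
  rw [psum_succ]
  split_ifs at hpar ⊢ <;> simp only [Nat.odd_iff, Nat.even_iff] at * <;> omega

theorem two_mul_psum_hphiB_add_hphiBDefect (h0 : ∀ j, l j = 0 → psum l j % 2 = 1) (k : ℕ) :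
    2 * psum (hphiB l) k + hphiBDefect l k = psum l k := by
  induction k with
  | zero => simp [psum, hphiBDefect]
  | succ k ih =>
    have := two_mul_hphiB_add_hphiBDefect hl hm (h0 k)
    rw [psum_succ, psum_succ]
    omega

theorem hphiB_eq_zero {j : ℕ} (hj : l j = 0) (hodd : psum l j % 2 = 1) : hphiB l j = 0 := by
  have := two_mul_hphiB_add_hphiBDefect hl hm fun _ => hodd
  simp only [hphiBDefect, psum_succ, hj, add_zero, hodd, if_true] at this
  omega

end Balance

namespace IsPartition

variable {l : ℕ → ℕ}

theorem hphiB_bounds_of_even (hl : IsPartition l) {j : ℕ} (hj : Even j) :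
    2 * hphiB l j ≤ l j ∧ l j ≤ 2 * hphiB l j + 2 := by
  have hs := hl.runStart_le j
  unfold hphiB
  split_ifs <;> simp only [Nat.odd_iff, Nat.even_iff] at * <;> omega

theorem hphiB_bounds_of_odd (hl : IsPartition l) {j : ℕ} (hj : Odd j) :
    l j ≤ 2 * hphiB l j ∧ 2 * hphiB l j ≤ l j + 2 := by
  have hs := hl.runStart_le j
  unfold hphiB
  split_ifs <;> simp only [Nat.odd_iff, Nat.even_iff] at * <;> omega

theorem hphiB_eq_of_apply_eq (hl : IsPartition l) {i j : ℕ} (h : l i = l j)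
    (hij : i % 2 = j % 2) : hphiB l i = hphiB l j := by
  have hs := runStart_congr h
  have hsi := hl.runStart_le i
  have hsj := hl.runStart_le j
  rw [hs] at hsi
  unfold hphiB
  rw [h, hs]
  split_ifs <;> simp only [Nat.odd_iff, Nat.even_iff] at * <;> omega

theorem isQuasiPartition_hphiB (hl : IsPartition l) : IsQuasiPartition (hphiB l) := by
  intro j
  rcases (hl.antitone (j.le_add_right 2)).lt_or_eq with hlt | heq
  · rcases Nat.even_or_odd j with hj | hj
    · have := hl.hphiB_bounds_of_even hj
      have := hl.hphiB_bounds_of_even (hj.add even_two)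
      omega
    · have := hl.hphiB_bounds_of_odd hj
      have := hl.hphiB_bounds_of_odd (hj.add_even even_two)
      omega
  · exact (hl.hphiB_eq_of_apply_eq heq (by omega)).le

theorem qB_hphiB (hl : IsPartition l) :
    QB (fun j => hphiB l (2 * j)) (fun j => hphiB l (2 * j + 1)) := by
  intro i
  show hphiB l (2 * i + 1) ≤ hphiB l (2 * i) + 2 ∧ hphiB l (2 * i + 2) ≤ hphiB l (2 * i + 1)
  have := hl.hphiB_bounds_of_even (even_two_mul i)
  have := hl.hphiB_bounds_of_odd (odd_two_mul_add_one i)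
  have := hl.hphiB_bounds_of_even (j := 2 * i + 2) ⟨i + 1, by ring⟩
  have := hl (2 * i)
  have : l (2 * i + 2) ≤ l (2 * i + 1) := hl _
  constructor <;> omega

end IsPartition

/-- for `λ ∈ P^B_{2n+1}`, `Φ̂^B(λ)` is a quasi-partition of `n`
whose associated bipartition is B-distinguished. -/
theorem hphiB_mem_QB (n : ℕ) (l : ℕ → ℕ) (h : IsPBN n l) :
    IsQuasiPartition (hphiB l) ∧ IsComposition n (hphiB l) ∧
      QB (fun j => hphiB l (2 * j)) (fun j => hphiB l (2 * j + 1)) := by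
  obtain ⟨hl, ⟨N, hN, hsum⟩, hm⟩ := h
  have hodd : ∀ j, l j = 0 → psum l j % 2 = 1 := fun j hj => by
    have htail : ∀ i, j ≤ i → l i = 0 := fun i hi => Nat.eq_zero_of_le_zero (hj ▸ hl.antitone hi)
    rw [psum_eq_of_forall_ge_eq_zero htail hN, hsum]
    omega
  refine ⟨hl.isQuasiPartition_hphiB, ⟨N, fun j hj => ?_, ?_⟩, hl.qB_hphiB⟩
  · exact hphiB_eq_zero hl hm (hN j hj) (hodd j (hN j hj))
  · have hbalance := two_mul_psum_hphiB_add_hphiBDefect hl hm hodd N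
    have hdefect : hphiBDefect l N = 1 := if_pos (by omega)
    omega
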